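/- (Non-negativity of the Misner–Sharp energy of a regular ball.) Let l₀ > 0, let r : [0,l₀] → ℝ be twice differentiable with r(0) = 0, continuous first derivative, r'(0) = 1, and r(l) > 0 for 0 < l ≤ l₀; let K_r : [0,l₀] → ℝ be differentiable and continuous at 0, and K_l, μ, j : (0,l₀] → ℝ, such that the Hamiltonian constraint K_r(K_r + 2K_l) − (r'² + 2 r r'' − 1)/r² = 8π μ and the momentum constraint K_r' + (r'/r)(K_r − K_l) = 4π j hold on (0,l₀]. Assume the dominant energy condition μ ≥ |j| holds on (0,l₀], and that both null expansions are positive at the boundary: r'(l₀) + K_r(l₀) r(l₀) > 0 and r'(l₀) − K_r(l₀) r(l₀) > 0. Then the Misner–Sharp energy of the boundary is non-negative: 𝓔(l₀) ≥ 0. -/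

import Mathlib

/-!
Along the ball the constraints give `d𝓔/dl = 4π r² (μ r' + j K_r r)`, which is non-negative by the
dominant energy condition wherever both expansions are non-negative, i.e. `|K_r r| ≤ r'`.
Let `c` be the last point of `[0, l₀]` where `r' - |K_r r|` vanishes, or `c = 0` if there is none.
Then `𝓔` is non-decreasing on `[c, l₀]`, and `𝓔(c) ≥ 0`: at the centre `𝓔 = 0`, and where an
expansion vanishes `f = 0`, so `𝓔 = r / 2`.
-/

open Set Real

noncomputable def misnerSharpEnergy (r r' Kr : ℝ → ℝ) (l : ℝ) : ℝ :=
  r l / 2 * (1 - r' l ^ 2 + (Kr l * r l) ^ 2)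

theorem exists_pos_on_Ioo_of_continuousOn {g : ℝ → ℝ} {a b : ℝ} (hab : a ≤ b)
    (hg : ContinuousOn g (Icc a b)) (hb : 0 < g b) :
    ∃ c ∈ Icc a b, (c = a ∨ g c = 0) ∧ ∀ x ∈ Ioo c b, 0 < g x := by
  by_cases hA : ∀ x ∈ Icc a b, 0 < g x
  · exact ⟨a, left_mem_Icc.2 hab, Or.inl rfl, fun x hx => hA x (Ioo_subset_Icc_self hx)⟩
  push Not at hA
  set A := Icc a b ∩ g ⁻¹' Iic 0
  have hAbdd : BddAbove A := ⟨b, fun x hx => hx.1.2⟩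
  have hcA : sSup A ∈ A :=
    (hg.preimage_isClosed_of_isClosed isClosed_Icc isClosed_Iic).csSup_mem hA hAbdd
  set c := sSup A
  have hpos : ∀ x ∈ Ioo c b, 0 < g x := fun x hx => by
    by_contra! hgx
    exact (le_csSup hAbdd ⟨⟨hcA.1.1.trans hx.1.le, hx.2.le⟩, hgx⟩).not_gt hx.1
  have hcb : c < b := hcA.1.2.lt_of_ne fun h => (h ▸ hcA.2 : g b ≤ 0).not_gt hb
  have hgc : 0 ≤ g c := by
    have hcont : ContinuousWithinAt g (Ioo c b) c :=
      (hg c hcA.1).mono fun x hx => ⟨hcA.1.1.trans hx.1.le, hx.2.le⟩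
    have := hcont.mem_closure (t := Ici 0) (by simp [closure_Ioo hcb.ne, hcb.le])
      fun x hx => (hpos x hx).le
    rwa [closure_Ici] at this
  exact ⟨c, hcA.1, Or.inr (le_antisymm hcA.2 hgc), hpos⟩

theorem mul_add_mul_nonneg_of_abs_le {μ j p k : ℝ} (hj : |j| ≤ μ) (hk : |k| ≤ p) :
    0 ≤ μ * p + j * k := by
  have := abs_mul j k ▸ mul_le_mul hj hk (abs_nonneg k) ((abs_nonneg j).trans hj)
  linarith [neg_abs_le (j * k)]

theorem hasDerivWithinAt_misnerSharpEnergy {r r' r'' Kr Kr' Kl μ j : ℝ → ℝ} {s : Set ℝ} {x : ℝ}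
    (hr : r x ≠ 0) (hr' : HasDerivWithinAt r (r' x) s x)
    (hr'' : HasDerivWithinAt r' (r'' x) s x) (hKr' : HasDerivWithinAt Kr (Kr' x) s x)
    (hham : Kr x * (Kr x + 2 * Kl x)
      - ((r' x) ^ 2 + 2 * r x * r'' x - 1) / (r x) ^ 2 = 8 * π * μ x)
    (hmom : Kr' x + (r' x / r x) * (Kr x - Kl x) = 4 * π * j x) :
    HasDerivWithinAt (misnerSharpEnergy r r' Kr)
      (4 * π * r x ^ 2 * (μ x * r' x + j x * (Kr x * r x))) s x := by
  refine ((hr'.div_const 2).fun_mul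
    (((hr''.fun_pow 2).const_sub 1).fun_add ((hKr'.fun_mul hr').fun_pow 2))).congr_deriv ?_
  field_simp at hham hmom
  linear_combination r' x / 2 * hham + Kr x * r x ^ 2 * hmom

theorem ContinuousOn.misnerSharpEnergy {r r' Kr : ℝ → ℝ} {s : Set ℝ} (hr : ContinuousOn r s)
    (hr' : ContinuousOn r' s) (hKr : ContinuousOn Kr s) :
    ContinuousOn (misnerSharpEnergy r r' Kr) s :=
  (hr.div_const 2).mul ((continuousOn_const.sub (hr'.pow 2)).add ((hKr.mul hr).pow 2))

theorem misnerSharpEnergy_nonneg_of_eq_abs {r r' Kr : ℝ → ℝ} {l : ℝ} (hr : 0 ≤ r l)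
    (h : r' l = |Kr l * r l|) : 0 ≤ misnerSharpEnergy r r' Kr l := by
  rw [misnerSharpEnergy, h, sq_abs, sub_add_cancel, mul_one]
  linarith

theorem misnerSharpEnergy_monotoneOn {r r' Kr μ j : ℝ → ℝ} {a b : ℝ}
    (hcont : ContinuousOn (misnerSharpEnergy r r' Kr) (Icc a b))
    (hderiv : ∀ x ∈ Ioo a b, HasDerivWithinAt (misnerSharpEnergy r r' Kr)
      (4 * π * r x ^ 2 * (μ x * r' x + j x * (Kr x * r x))) (Ioo a b) x)
    (hDEC : ∀ x ∈ Ioo a b, |j x| ≤ μ x) (hexp : ∀ x ∈ Ioo a b, |Kr x * r x| ≤ r' x) :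
    MonotoneOn (misnerSharpEnergy r r' Kr) (Icc a b) := by
  rw [← interior_Icc] at hderiv hDEC hexp
  exact monotoneOn_of_hasDerivWithinAt_nonneg (convex_Icc a b) hcont hderiv fun x hx =>
    mul_nonneg (by positivity) (mul_add_mul_nonneg_of_abs_le (hDEC x hx) (hexp x hx))

theorem misner_sharp_energy_of_regular_ball_nonneg_general
    (l₀ : ℝ) (hl₀ : 0 < l₀) (r r' r'' Kr Kr' Kl μ j : ℝ → ℝ)
    (hr0 : r 0 = 0)
    (hrpos : ∀ l ∈ Ioc 0 l₀, 0 < r l)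
    (hr' : ∀ l ∈ Icc 0 l₀, HasDerivWithinAt r (r' l) (Icc 0 l₀) l)
    (hr'cont : ContinuousOn r' (Icc 0 l₀))
    (hr'' : ∀ l ∈ Ioc 0 l₀, HasDerivWithinAt r' (r'' l) (Icc 0 l₀) l)
    (hKr' : ∀ l ∈ Ioc 0 l₀, HasDerivWithinAt Kr (Kr' l) (Icc 0 l₀) l)
    (hKrcont0 : ContinuousWithinAt Kr (Icc 0 l₀) 0)
    (hham : ∀ l ∈ Ioc 0 l₀, Kr l * (Kr l + 2 * Kl l)
      - ((r' l) ^ 2 + 2 * r l * r'' l - 1) / (r l) ^ 2 = 8 * Real.pi * μ l)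
    (hmom : ∀ l ∈ Ioc 0 l₀,
      Kr' l + (r' l / r l) * (Kr l - Kl l) = 4 * Real.pi * j l)
    (hDEC : ∀ l ∈ Ioc 0 l₀, |j l| ≤ μ l)
    (hθp : 0 < r' l₀ + Kr l₀ * r l₀)
    (hθm : 0 < r' l₀ - Kr l₀ * r l₀) :
    0 ≤ r l₀ / 2 * (1 - (r' l₀) ^ 2 + (Kr l₀ * r l₀) ^ 2) := by
  have hrc : ContinuousOn r (Icc 0 l₀) := fun x hx => (hr' x hx).continuousWithinAt
  have hKrc : ContinuousOn Kr (Icc 0 l₀) := fun x hx =>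
    hx.1.eq_or_lt.elim (fun h => h ▸ hKrcont0) fun h => (hKr' x ⟨h, hx.2⟩).continuousWithinAt
  obtain ⟨c, ⟨hc0, hcl⟩, hc, hexp⟩ := exists_pos_on_Ioo_of_continuousOn
    (g := fun l => r' l - |Kr l * r l|) hl₀.le (hr'cont.sub (hKrc.mul hrc).abs)
    (sub_pos.2 (abs_lt.2 ⟨by linarith, by linarith⟩))
  have hEc : 0 ≤ misnerSharpEnergy r r' Kr c := by
    rcases hc0.eq_or_lt with rfl | hc0
    · simp [misnerSharpEnergy, hr0]
    exact misnerSharpEnergy_nonneg_of_eq_abs (hrpos c ⟨hc0, hcl⟩).le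
      (sub_eq_zero.1 (hc.resolve_left hc0.ne'))
  have hIoo : Ioo c l₀ ⊆ Ioc 0 l₀ := fun x hx => ⟨hc0.trans_lt hx.1, hx.2.le⟩
  have hmono : MonotoneOn (misnerSharpEnergy r r' Kr) (Icc c l₀) :=
    misnerSharpEnergy_monotoneOn
      ((hrc.misnerSharpEnergy hr'cont hKrc).mono (Icc_subset_Icc hc0 le_rfl))
      (fun x hx => (hasDerivWithinAt_misnerSharpEnergy (hrpos x (hIoo hx)).ne'
        (hr' x (Ioc_subset_Icc_self (hIoo hx))) (hr'' x (hIoo hx)) (hKr' x (hIoo hx))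
        (hham x (hIoo hx)) (hmom x (hIoo hx))).mono fun y hy => ⟨(hIoo hy).1.le, hy.2.le⟩)
      (fun x hx => hDEC x (hIoo hx)) (fun x hx => (sub_pos.1 (hexp x hx)).le)
  exact hEc.trans (hmono ⟨le_rfl, hcl⟩ ⟨hcl, le_rfl⟩ hcl)

/-- Lemma 1, non-negativity of the Misner–Sharp energy of a
regular ball: if the constraint equations and the dominant energy condition
hold on a regular ball `[0,l₀]` and both null expansions are positive at the
boundary, then the Misner–Sharp energy of the boundary is non-negative. -/
theorem misner_sharp_energy_of_regular_ball_nonneg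
    (l₀ : ℝ) (hl₀ : 0 < l₀) (r r' r'' Kr Kr' Kl μ j : ℝ → ℝ)
    (hr0 : r 0 = 0) (hr'0 : r' 0 = 1)
    (hrpos : ∀ l ∈ Ioc 0 l₀, 0 < r l)
    (hr' : ∀ l ∈ Icc 0 l₀, HasDerivWithinAt r (r' l) (Icc 0 l₀) l)
    (hr'cont : ContinuousOn r' (Icc 0 l₀))
    (hr'' : ∀ l ∈ Ioc 0 l₀, HasDerivWithinAt r' (r'' l) (Icc 0 l₀) l)
    (hKr' : ∀ l ∈ Ioc 0 l₀, HasDerivWithinAt Kr (Kr' l) (Icc 0 l₀) l)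
    (hKrcont0 : ContinuousWithinAt Kr (Icc 0 l₀) 0)
    (hham : ∀ l ∈ Ioc 0 l₀, Kr l * (Kr l + 2 * Kl l)
      - ((r' l) ^ 2 + 2 * r l * r'' l - 1) / (r l) ^ 2 = 8 * Real.pi * μ l)
    (hmom : ∀ l ∈ Ioc 0 l₀,
      Kr' l + (r' l / r l) * (Kr l - Kl l) = 4 * Real.pi * j l)
    (hDEC : ∀ l ∈ Ioc 0 l₀, |j l| ≤ μ l)
    (hθp : 0 < r' l₀ + Kr l₀ * r l₀)
    (hθm : 0 < r' l₀ - Kr l₀ * r l₀) :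
    0 ≤ r l₀ / 2 * (1 - (r' l₀) ^ 2 + (Kr l₀ * r l₀) ^ 2) :=
  misner_sharp_energy_of_regular_ball_nonneg_general l₀ hl₀ r r' r'' Kr Kr' Kl μ j hr0 hrpos hr'
    hr'cont hr'' hKr' hKrcont0 hham hmom hDEC hθp hθm
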